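/- For every pair of unit quaternions p, q, the ℝ-linear endomorphism of ℍ given by x ↦ p * x * q⁻¹ has determinant 1. (Hence the image of the homomorphism (p,q) ↦ (x ↦ p x q⁻¹) consists of orientation-preserving linear isometries of ℍ, i.e. lies in SO(4).) -/

import Mathlib

open Quaternion

/-- The standard basis `1, i, j, k` of the quaternions over `ℝ`. -/
noncomputable def qb : Module.Basis (Fin 4) ℝ ℍ[ℝ] := QuaternionAlgebra.basisOneIJK (-1 : ℝ) 0 (-1)

lemma qbrepr (x : ℍ[ℝ]) (i : Fin 4) : qb.repr x i = ![x.re, x.imI, x.imJ, x.imK] i := rfl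

lemma qbv (j : Fin 4) : (qb j : ℍ[ℝ]) = ![⟨1,0,0,0⟩, ⟨0,1,0,0⟩, ⟨0,0,1,0⟩, ⟨0,0,0,1⟩] j := by
  apply qb.repr.injective
  ext i
  rw [Module.Basis.repr_self]
  fin_cases i <;> fin_cases j <;>
    simp [qbrepr, Finsupp.single_apply]
  all_goals rfl

lemma det_mulLeft_q (p : ℍ[ℝ]) :
    LinearMap.det (LinearMap.mulLeft ℝ p) = (normSq p)^2 := by
  rw [← LinearMap.det_toMatrix qb]
  have hm : LinearMap.toMatrix qb qb (LinearMap.mulLeft ℝ p) =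
      !![p.re, -p.imI, -p.imJ, -p.imK;
         p.imI, p.re, -p.imK, p.imJ;
         p.imJ, p.imK, p.re, -p.imI;
         p.imK, -p.imJ, p.imI, p.re] := by
    ext i j
    rw [LinearMap.toMatrix_apply, LinearMap.mulLeft_apply, qbv, qbrepr]
    erw [Quaternion.re_mul, Quaternion.imI_mul, Quaternion.imJ_mul, Quaternion.imK_mul]
    fin_cases i <;> fin_cases j <;>
      simp [Quaternion.re_mul, Quaternion.imI_mul,
        Quaternion.imJ_mul, Quaternion.imK_mul]
  rw [hm]
  simp [Matrix.det_succ_row_zero, Fin.sum_univ_succ, Fin.succAbove, Fin.castSucc,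
    Fin.castAdd, Fin.castLE, normSq_def']
  ring

lemma det_mulRight_q (p : ℍ[ℝ]) :
    LinearMap.det (LinearMap.mulRight ℝ p) = (normSq p)^2 := by
  rw [← LinearMap.det_toMatrix qb]
  have hm : LinearMap.toMatrix qb qb (LinearMap.mulRight ℝ p) =
      !![p.re, -p.imI, -p.imJ, -p.imK;
         p.imI, p.re, p.imK, -p.imJ;
         p.imJ, -p.imK, p.re, p.imI;
         p.imK, p.imJ, -p.imI, p.re] := by
    ext i j
    rw [LinearMap.toMatrix_apply, LinearMap.mulRight_apply, qbv, qbrepr]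
    erw [Quaternion.re_mul, Quaternion.imI_mul, Quaternion.imJ_mul, Quaternion.imK_mul]
    fin_cases i <;> fin_cases j <;>
      simp [Quaternion.re_mul, Quaternion.imI_mul,
        Quaternion.imJ_mul, Quaternion.imK_mul]
  rw [hm]
  simp [Matrix.det_succ_row_zero, Fin.sum_univ_succ, Fin.succAbove, Fin.castSucc,
    Fin.castAdd, Fin.castLE, normSq_def']
  ring

/-- For unit quaternions `p, q`, the `ℝ`-linear endomorphism
`x ↦ p * x * q⁻¹` of `ℍ` has determinant `1`. -/
theorem det_quaternion_conj_map (p q : ℍ[ℝ]) (hp : ‖p‖ = 1) (hq : ‖q‖ = 1) :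
    LinearMap.det ((LinearMap.mulLeft ℝ p).comp (LinearMap.mulRight ℝ q⁻¹)) = 1 := by
  rw [LinearMap.det_comp, det_mulLeft_q, det_mulRight_q]
  have h1 : normSq p = 1 := by
    rw [normSq_eq_norm_mul_self, hp]; norm_num
  have h2 : normSq q⁻¹ = 1 := by
    rw [normSq_eq_norm_mul_self, norm_inv, hq]; norm_num
  rw [h1, h2]; norm_num
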